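/- Let P be an r×d real matrix with λ I_d + Pᵀ P H invertible, H a symmetric positive semidefinite d×d matrix with rank(H) < d, and λ > 0. Define ΔH = (λ I_d + H)⁻¹ - Pᵀ (λ I_r + P H Pᵀ)⁻¹ P. Then ‖ΔH‖₂ ≤ 1/λ + σ_max(PᵀP)/λ + σ_max(PᵀP)² σ_max(H)/λ², where ‖·‖₂ denotes the operator norm and σ_max the largest singular value. -/

import Mathlib

/-!
Write `M = λ I + P H Pᵀ`. From `M⁻¹ M = I` one gets `M⁻¹ = λ⁻¹ (I - M⁻¹ P H Pᵀ)`, hence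
`Pᵀ M⁻¹ P = λ⁻¹ (PᵀP - (Pᵀ M⁻¹ P) H (PᵀP))`. Both regularised inverses have norm at most `λ⁻¹`
because `re ⟪(λ I + S) x, x⟫ ≥ λ ‖x‖²` for `S ⪰ 0`, so `‖Pᵀ M⁻¹ P‖ ≤ ‖PᵀP‖ / λ`, and the triangle
inequality applied to `ΔH = (λ I + H)⁻¹ - λ⁻¹ PᵀP + λ⁻¹ (Pᵀ M⁻¹ P) H (PᵀP)` gives the bound.
-/

open Matrix

/-- The operator (spectral) norm of a matrix, i.e. its largest singular value. -/
noncomputable def opNorm {m n : ℕ} (A : Matrix (Fin m) (Fin n) ℝ) : ℝ :=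
  ‖LinearMap.toContinuousLinearMap (Matrix.toEuclideanLin A)‖

open scoped Matrix.Norms.L2Operator ComplexOrder

lemma opNorm_eq_norm {m n : ℕ} (A : Matrix (Fin m) (Fin n) ℝ) : opNorm A = ‖A‖ := rfl

theorem Matrix.mul_inv_smul_one_add_mul_eq {K m n : Type*} [Field K] [Fintype m] [DecidableEq m]
    [Fintype n] (Q : Matrix n m K) (P : Matrix m n K) (H : Matrix n n K) {lam : K}
    (hlam : lam ≠ 0) (hM : IsUnit (lam • 1 + P * H * Q)) :
    Q * (lam • 1 + P * H * Q)⁻¹ * P =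
      lam⁻¹ • (Q * P - Q * (lam • 1 + P * H * Q)⁻¹ * P * H * (Q * P)) := by
  set M := lam • 1 + P * H * Q
  have hMinv : M⁻¹ = lam⁻¹ • (1 - M⁻¹ * (P * H * Q)) := by
    rw [← M.nonsing_inv_mul ((isUnit_iff_isUnit_det M).mp hM)]
    simp only [M, Matrix.mul_add, mul_smul_comm, mul_one, add_sub_cancel_right, smul_smul,
      inv_mul_cancel₀ hlam, one_smul]
  conv_lhs => rw [hMinv]
  simp only [Matrix.mul_smul, Matrix.smul_mul, Matrix.mul_sub, Matrix.sub_mul, Matrix.mul_one,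
    Matrix.mul_assoc]

theorem Matrix.PosSemidef.posDef_smul_one_add {𝕜 n : Type*} [RCLike 𝕜] [DecidableEq n]
    {S : Matrix n n 𝕜} (hS : S.PosSemidef) {lam : ℝ} (hlam : 0 < lam) : (lam • 1 + S).PosDef :=
  (PosDef.one.smul hlam).add_posSemidef hS

section RCLike

variable {𝕜 m n : Type*} [RCLike 𝕜] [Fintype m] [Fintype n] [DecidableEq n]

theorem Matrix.l2_opNorm_conjTranspose_mul_mul_le [DecidableEq m] (P : Matrix m n 𝕜)
    (A : Matrix m m 𝕜) : ‖Pᴴ * A * P‖ ≤ ‖Pᴴ * P‖ * ‖A‖ :=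
  calc ‖Pᴴ * A * P‖ ≤ ‖Pᴴ‖ * ‖A‖ * ‖P‖ :=
        (l2_opNorm_mul _ _).trans (by gcongr; exact l2_opNorm_mul _ _)
    _ = ‖Pᴴ * P‖ * ‖A‖ := by
        rw [l2_opNorm_conjTranspose, l2_opNorm_conjTranspose_mul_self]; ring

theorem Matrix.PosSemidef.mul_norm_le_norm_toEuclideanLin_smul_one_add {S : Matrix n n 𝕜}
    (hS : S.PosSemidef) (lam : ℝ) (x : EuclideanSpace 𝕜 n) :
    lam * ‖x‖ ≤ ‖toEuclideanLin (lam • 1 + S) x‖ := by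
  have hSx := (isPositive_toEuclideanLin_iff.mpr hS).re_inner_nonneg_left x
  have hsmul : toEuclideanLin (lam • (1 : Matrix n n 𝕜)) x = lam • x := by
    ext i; simp [toLpLin_apply, Matrix.smul_mulVec]
  have hinner : lam * ‖x‖ ^ 2 ≤ ‖toEuclideanLin (lam • 1 + S) x‖ * ‖x‖ := by
    refine le_trans ?_ ((RCLike.re_le_norm _).trans (norm_inner_le_norm (𝕜 := 𝕜) _ x))
    rw [map_add, LinearMap.add_apply, inner_add_left, map_add, hsmul,
      RCLike.real_smul_eq_coe_smul (K := 𝕜), inner_smul_left]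
    simpa using hSx
  rcases (norm_nonneg x).eq_or_lt with hx | hx
  · simp [← hx]
  · nlinarith

theorem Matrix.PosSemidef.l2_opNorm_inv_smul_one_add_le {S : Matrix n n 𝕜}
    (hS : S.PosSemidef) {lam : ℝ} (hlam : 0 < lam) : ‖(lam • 1 + S)⁻¹‖ ≤ lam⁻¹ := by
  set M := lam • 1 + S
  rw [l2_opNorm_def]
  refine ContinuousLinearMap.opNorm_le_bound _ (by positivity) fun x => ?_
  have hMM : toEuclideanLin M (toEuclideanLin M⁻¹ x) = x := by
    rw [← LinearMap.comp_apply, ← toLpLin_mul_same,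
      mul_nonsing_inv _ ((isUnit_iff_isUnit_det _).mp (hS.posDef_smul_one_add hlam).isUnit),
      toLpLin_one, LinearMap.id_apply]
  have := hS.mul_norm_le_norm_toEuclideanLin_smul_one_add lam (toEuclideanLin M⁻¹ x)
  rw [hMM] at this
  exact (le_inv_mul_iff₀ hlam).mpr this

end RCLike

theorem gaussian_compression_error_bound_general {r d : ℕ}
    (P : Matrix (Fin r) (Fin d) ℝ)
    (H : Matrix (Fin d) (Fin d) ℝ) (hH : H.PosSemidef)
    (lam : ℝ) (hlam : 0 < lam) :
    opNorm ((lam • (1 : Matrix (Fin d) (Fin d) ℝ) + H)⁻¹ -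
        Pᵀ * (lam • (1 : Matrix (Fin r) (Fin r) ℝ) + P * H * Pᵀ)⁻¹ * P) ≤
      1 / lam + opNorm (Pᵀ * P) / lam +
        opNorm (Pᵀ * P) ^ 2 * opNorm H / lam ^ 2 := by
  simp only [opNorm_eq_norm, ← conjTranspose_eq_transpose_of_trivial]
  have hS : (P * H * Pᴴ).PosSemidef := hH.mul_mul_conjTranspose_same P
  set M := lam • (1 : Matrix (Fin r) (Fin r) ℝ) + P * H * Pᴴ
  have hT : ‖Pᴴ * M⁻¹ * P‖ ≤ ‖Pᴴ * P‖ * lam⁻¹ :=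
    (l2_opNorm_conjTranspose_mul_mul_le P _).trans
      (by gcongr; exact hS.l2_opNorm_inv_smul_one_add_le hlam)
  rw [mul_inv_smul_one_add_mul_eq _ _ _ hlam.ne' (hS.posDef_smul_one_add hlam).isUnit, smul_sub]
  calc _ ≤ ‖(lam • (1 : Matrix (Fin d) (Fin d) ℝ) + H)⁻¹‖ +
          (‖lam⁻¹ • (Pᴴ * P)‖ + ‖lam⁻¹ • (Pᴴ * M⁻¹ * P * H * (Pᴴ * P))‖) :=
        (norm_sub_le _ _).trans (by grw [norm_sub_le])
    _ ≤ lam⁻¹ + (lam⁻¹ * ‖Pᴴ * P‖ + lam⁻¹ * (‖Pᴴ * P‖ * lam⁻¹ * ‖H‖ * ‖Pᴴ * P‖)) := by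
        simp only [norm_smul, Real.norm_of_nonneg (inv_nonneg.mpr hlam.le)]
        gcongr
        · exact hH.l2_opNorm_inv_smul_one_add_le hlam
        · exact (l2_opNorm_mul _ _).trans (by
            gcongr; exact (l2_opNorm_mul _ _).trans (mul_le_mul_of_nonneg_right hT (norm_nonneg _)))
    _ = _ := by field_simp; ring

/-- Intermediate bound in the Gaussian compression error bound (Theorem 1). -/
theorem gaussian_compression_error_bound {r d : ℕ}
    (P : Matrix (Fin r) (Fin d) ℝ)
    (H : Matrix (Fin d) (Fin d) ℝ) (hH : H.PosSemidef) (hrank : H.rank < d)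
    (lam : ℝ) (hlam : 0 < lam)
    (hInv : IsUnit (lam • (1 : Matrix (Fin d) (Fin d) ℝ) + Pᵀ * P * H)) :
    opNorm ((lam • (1 : Matrix (Fin d) (Fin d) ℝ) + H)⁻¹ -
        Pᵀ * (lam • (1 : Matrix (Fin r) (Fin r) ℝ) + P * H * Pᵀ)⁻¹ * P) ≤
      1 / lam + opNorm (Pᵀ * P) / lam +
        opNorm (Pᵀ * P) ^ 2 * opNorm H / lam ^ 2 :=
  gaussian_compression_error_bound_general P H hH lam hlam
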